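/- Every homotopy fibration sequence of loop spaces deloops fibers correctly: if F → E → B is a homotopy fibration sequence and i : F' → E is another map with a homotopy equivalence φ : F' → F over E, then the induced map of homotopy fibers of (E → B) computed from F' is a weak equivalence; in particular in the comparison of the fibrations G --incl--> G × Z --proj--> Z and G --Δ--> G × Z --q--> W via the shearing homotopy equivalence, the induced map of homotopy fibers ΩZ → ΩW is a weak homotopy equivalence. -/

import Mathlib

/-!
A homotopy `H` from `i` to `f ∘ φ` gives a homotopy, inside the homotopy fiber, from the
comparison map of `(i, H)` to `fiberComparison ∘ φ`: slide the starting point of the path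
`p ∘ H (x, -)` along `H`. Weak equivalences are closed under composition, homotopy equivalences
are weak equivalences, and being a weak equivalence is invariant under free homotopy.

The last point carries the work, because a free homotopy moves the basepoint. The two induced
maps on `π_n` differ by the change-of-basepoint bijection along the track of the basepoint,
realized on generalized loops by shrinking the cube into a concentric subcube and letting the
path run radially across the collar.
-/

open scoped unitInterval
open ContinuousMap CategoryTheory

noncomputable section
/-- The map induced by a continuous map on homotopy groups (including `π₀` for `N = Fin 0`). -/
noncomputable def HomotopyGroup.inducedMap (N : Type*) {X Y : Type*} [TopologicalSpace X]
    [TopologicalSpace Y] (f : C(X, Y)) (x : X) :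
    HomotopyGroup N X x → HomotopyGroup N Y (f x) :=
  Quotient.map
    (fun p => ⟨f.comp p.1, fun y hy => by
      have := p.2 y hy
      simp [this]⟩)
    (fun p q h => h.map fun F => F.compContinuousMap f)

/-- A continuous map is a weak homotopy equivalence if it induces bijections on all homotopy
groups (including `π₀`, which is the case `n = 0`) at all basepoints. -/
def IsWeakHomotopyEquiv {X Y : Type*} [TopologicalSpace X] [TopologicalSpace Y]
    (f : C(X, Y)) : Prop :=
  ∀ (n : ℕ) (x : X), Function.Bijective (HomotopyGroup.inducedMap (Fin n) f x)
/-- The homotopy fiber of a map over a point: pairs of a point of the source together with a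
path from its image to the basepoint. -/
def HomotopyFiber {X Y : Type} [TopologicalSpace X] [TopologicalSpace Y] (f : C(X, Y))
    (y₀ : Y) : Type :=
  { p : X × C(I, Y) // p.2 0 = f p.1 ∧ p.2 1 = y₀ }

instance {X Y : Type} [TopologicalSpace X] [TopologicalSpace Y] (f : C(X, Y)) (y₀ : Y) :
    TopologicalSpace (HomotopyFiber f y₀) := by
  unfold HomotopyFiber; infer_instance

open scoped Topology Topology.Homotopy
open Set (projIcc)

namespace Cube

section Stretch

variable {N : Type*}

def stretch (s : I) (t : I^N) : I^N :=
  fun i => projIcc 0 1 zero_le_one ((t i - s / 4) / (1 - s / 2))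

@[simp]
theorem stretch_zero (t : I^N) : stretch 0 t = t := by
  funext i
  simp [stretch]

theorem continuous_stretch : Continuous fun p : I × I^N => stretch p.1 p.2 := by
  refine continuous_pi fun i => continuous_projIcc.comp (Continuous.div (by fun_prop)
    (by fun_prop) fun p => ?_)
  linarith [p.1.2.2]

end Stretch

variable {N : Type*} [Fintype N] [Nonempty N]

def distBoundary (t : I^N) : ℝ :=
  Finset.univ.inf' Finset.univ_nonempty fun i => min (t i : ℝ) (1 - t i)

@[fun_prop]
theorem continuous_distBoundary : Continuous (distBoundary (N := N)) :=
  Continuous.finset_inf'_apply _ fun i _ => by fun_prop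

theorem distBoundary_nonneg (t : I^N) : 0 ≤ distBoundary t :=
  Finset.le_inf' _ _ fun i _ => le_min (t i).2.1 (by linarith [(t i).2.2])

theorem distBoundary_eq_zero_of_mem_boundary {t : I^N} (ht : t ∈ boundary N) :
    distBoundary t = 0 := by
  obtain ⟨i, hi | hi⟩ := ht <;>
  · refine le_antisymm ((Finset.inf'_le _ (Finset.mem_univ i)).trans ?_) (distBoundary_nonneg t)
    simp [hi]

theorem stretch_mem_boundary {s : I} {t : I^N} (h : distBoundary t = s / 4) :
    stretch s t ∈ boundary N := by
  obtain ⟨i, -, hi⟩ := Finset.exists_mem_eq_inf' Finset.univ_nonempty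
    fun i => min (t i : ℝ) (1 - t i)
  have hden : (1 - s / 2 : ℝ) ≠ 0 := by linarith [s.2.2]
  refine ⟨i, ?_⟩
  rcases min_choice (t i : ℝ) (1 - t i) with hc | hc <;> rw [← distBoundary, h] at hi <;>
    rw [hc] at hi
  · left
    simp [stretch, ← hi]
  · right
    have : ((t i : ℝ) - s / 4) / (1 - s / 2) = 1 := by
      rw [div_eq_one_iff_eq hden]; linarith
    simp [stretch, this]

variable {Y : Type*}

/-- `q`, stretched, on the subcube of points at depth at least `r / 4`, and `c` of the
remaining depth on the collar around it. -/
def collar (r : I) (q : (I^N) → Y) (c : ℝ → Y) (t : I^N) : Y :=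
  if (r : ℝ) / 4 ≤ distBoundary t then q (stretch r t) else c (r - 4 * distBoundary t)

@[simp]
theorem collar_zero (q : (I^N) → Y) (c : ℝ → Y) (t : I^N) : collar 0 q c t = q t := by
  simp [collar, distBoundary_nonneg]

theorem collar_congr {r : I} {q q' : (I^N) → Y} {c c' : ℝ → Y} (hq : q = q')
    (hc : ∀ v > 0, c v = c' v) (t : I^N) : collar r q c t = collar r q' c' t := by
  subst hq
  unfold collar
  split_ifs with h
  · rfl
  · exact hc _ (by linarith)

theorem collar_of_mem_boundary {r : I} {q : (I^N) → Y} {c : ℝ → Y}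
    (hqc : ∀ u ∈ boundary N, q u = c 0) {t : I^N} (ht : t ∈ boundary N) :
    collar r q c t = c r := by
  rw [collar, distBoundary_eq_zero_of_mem_boundary ht]
  split_ifs with hr
  · obtain rfl : r = 0 := le_antisymm (by exact_mod_cast (by linarith : (r : ℝ) ≤ 0)) r.2.1
    simp [hqc t ht]
  · simp

theorem _root_.Continuous.collar [TopologicalSpace Y] {Z : Type*} [TopologicalSpace Z]
    {r : Z → I} {q : Z → (I^N) → Y} {c : Z → ℝ → Y} {t : Z → I^N} (hr : Continuous r)
    (hq : Continuous ↿q) (hc : Continuous ↿c) (ht : Continuous t)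
    (hqc : ∀ z, ∀ u ∈ boundary N, q z u = c z 0) :
    Continuous fun z => collar (r z) (q z) (c z) (t z) := by
  refine Continuous.if_le (hq.comp (continuous_id.prodMk (continuous_stretch.comp
    (hr.prodMk ht)))) (hc.comp (continuous_id.prodMk (by fun_prop))) (by fun_prop)
    (continuous_distBoundary.comp ht) fun z hz => ?_
  show q z _ = c z _
  rw [hqc z _ (stretch_mem_boundary hz.symm), ← hz]
  ring_nf

end Cube

namespace GenLoop

variable {N Y : Type*} [TopologicalSpace Y] {y₀ y₁ : Y}

def HomotopicAlong (γ : Path y₀ y₁) (a : Ω^ N Y y₀) (b : Ω^ N Y y₁) : Prop :=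
  ∃ Φ : Homotopy (a : C(I^N, Y)) b, ∀ s, ∀ t ∈ Cube.boundary N, Φ (s, t) = γ s

theorem HomotopicAlong.symm {γ : Path y₀ y₁} {a : Ω^ N Y y₀} {b : Ω^ N Y y₁}
    (h : HomotopicAlong γ a b) : HomotopicAlong γ.symm b a := by
  obtain ⟨Φ, hΦ⟩ := h
  exact ⟨Φ.symm, fun s t ht => hΦ _ t ht⟩

theorem HomotopicAlong.homotopic {a b : Ω^ N Y y₀} (h : HomotopicAlong (Path.refl y₀) a b) :
    Homotopic a b := by
  obtain ⟨Φ, hΦ⟩ := h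
  exact ⟨⟨Φ, fun s t ht => (hΦ s t ht).trans (a.2 t ht).symm⟩⟩

variable [Fintype N] [Nonempty N]

def whisker (γ : Path y₀ y₁) (a : Ω^ N Y y₀) : Ω^ N Y y₁ :=
  have ha : ∀ u ∈ Cube.boundary N, a u = γ.extend 0 := fun u hu => by
    simp [GenLoop.boundary a u hu]
  ⟨⟨Cube.collar 1 a γ.extend, continuous_const.collar (q := fun _ => a) (by fun_prop)
    (c := fun _ => γ.extend) (by fun_prop) continuous_id fun _ => ha⟩,
    fun _ ht => by
      rw [ContinuousMap.coe_mk, Cube.collar_of_mem_boundary ha ht]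
      simp⟩

theorem Homotopic.homotopicAlong_whisker {a a' : Ω^ N Y y₀} (h : Homotopic a a')
    (γ : Path y₀ y₁) : HomotopicAlong γ a (whisker γ a') := by
  obtain ⟨Q⟩ := h
  have hQ : ∀ s, ∀ u ∈ Cube.boundary N, Q (s, u) = γ.extend 0 := fun s u hu => by
    rw [Q.eq_fst s hu, a.2 u hu, γ.extend_zero]
  refine ⟨⟨⟨fun p => Cube.collar p.1 (fun u => Q (p.1, u)) γ.extend p.2,
    continuous_fst.collar (q := fun p u => Q (p.1, u)) (by fun_prop) (c := fun _ => γ.extend)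
      (by fun_prop) continuous_snd fun p => hQ p.1⟩, fun t => ?_, fun t => ?_⟩,
    fun s t ht => (Cube.collar_of_mem_boundary (hQ s) ht).trans (γ.extend_extends' s)⟩
  · dsimp only
    simp
  · dsimp only [whisker]
    simp

theorem HomotopicAlong.homotopic_whisker_whisker_refl {γ : Path y₀ y₁} {a : Ω^ N Y y₀}
    {b : Ω^ N Y y₁} (h : HomotopicAlong γ a b) :
    Homotopic (whisker γ a) (whisker (Path.refl y₁) b) := by
  obtain ⟨Φ, hΦ⟩ := h
  have hΦ' : ∀ s, ∀ u ∈ Cube.boundary N, Φ (s, u) = γ.extend (max s 0) := fun s u hu => by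
    simp [hΦ s u hu, max_eq_left s.2.1]
  refine ⟨⟨⟨⟨fun p => Cube.collar 1 (fun u => Φ (p.1, u)) (fun v => γ.extend (max p.1 v))
    p.2,
    continuous_const.collar (q := fun p u => Φ (p.1, u)) (by fun_prop)
      (c := fun p v => γ.extend (max p.1 v)) (by fun_prop) continuous_snd fun p => hΦ' p.1⟩,
    fun t => ?_, fun t => ?_⟩, fun s t ht => ?_⟩⟩
  · exact Cube.collar_congr (c := fun v => γ.extend (max ((0 : I) : ℝ) v))
      (funext Φ.apply_zero) (fun v hv => by simp [hv.le]) t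
  · exact Cube.collar_congr (c := fun v => γ.extend (max ((1 : I) : ℝ) v))
      (funext Φ.apply_one) (fun v _ => by simp [γ.extend_of_one_le]) t
  · refine (Cube.collar_of_mem_boundary (r := 1) (c := fun v => γ.extend (max (s : ℝ) v))
      (hΦ' s) ht).trans ?_
    rw [(whisker γ a).2 t ht]
    exact γ.extend_of_one_le (le_max_of_le_right le_rfl)

theorem homotopic_whisker_refl (b : Ω^ N Y y₀) : Homotopic (whisker (Path.refl y₀) b) b :=
  ((Homotopic.refl b).homotopicAlong_whisker _).homotopic.symm

theorem HomotopicAlong.homotopic_whisker {γ : Path y₀ y₁} {a : Ω^ N Y y₀} {b : Ω^ N Y y₁}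
    (h : HomotopicAlong γ a b) : Homotopic (whisker γ a) b :=
  h.homotopic_whisker_whisker_refl.trans (homotopic_whisker_refl b)

theorem Homotopic.whisker {a a' : Ω^ N Y y₀} (h : Homotopic a a') (γ : Path y₀ y₁) :
    Homotopic (whisker γ a) (whisker γ a') :=
  (h.homotopicAlong_whisker γ).homotopic_whisker

end GenLoop

namespace HomotopyGroup

open GenLoop Function

section Transport

variable {N Y : Type*} [Fintype N] [Nonempty N] [TopologicalSpace Y] {y₀ y₁ : Y}

def transport (γ : Path y₀ y₁) : HomotopyGroup N Y y₀ ≃ HomotopyGroup N Y y₁ where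
  toFun := Quotient.map (whisker γ) fun _ _ h => h.whisker γ
  invFun := Quotient.map (whisker γ.symm) fun _ _ h => h.whisker γ.symm
  left_inv := by
    rintro ⟨a⟩
    exact Quotient.sound ((Homotopic.refl a).homotopicAlong_whisker γ).symm.homotopic_whisker
  right_inv := by
    rintro ⟨b⟩
    have h := ((Homotopic.refl b).homotopicAlong_whisker γ.symm).symm
    rw [Path.symm_symm] at h
    exact Quotient.sound h.homotopic_whisker

theorem transport_mk {γ : Path y₀ y₁} {a : Ω^ N Y y₀} {b : Ω^ N Y y₁}
    (h : HomotopicAlong γ a b) : transport γ ⟦a⟧ = ⟦b⟧ :=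
  Quotient.sound h.homotopic_whisker

end Transport

variable {N X Y : Type*} [TopologicalSpace X] [TopologicalSpace Y]

theorem inducedMap_id (x : X) : inducedMap N (ContinuousMap.id X) x = id := by
  funext q
  induction q using Quotient.ind
  rfl

theorem inducedMap_comp {Z : Type*} [TopologicalSpace Z] (f : C(X, Y)) (g : C(Y, Z)) (x : X) :
    inducedMap N (g.comp f) x = inducedMap N g (f x) ∘ inducedMap N f x := by
  funext q
  induction q using Quotient.ind
  rfl

theorem _root_.ContinuousMap.Homotopy.transport_comp_inducedMap [Fintype N] [Nonempty N]
    {f g : C(X, Y)} (K : f.Homotopy g) (x : X) :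
    transport (K.evalAt x) ∘ inducedMap N f x = inducedMap N g x := by
  funext q
  induction q using Quotient.ind with
  | _ a => exact transport_mk ⟨K.compContinuousMap a.1, fun s t ht => by simp [a.2 t ht]⟩

theorem _root_.ContinuousMap.Homotopy.zerothHomotopy_comp_inducedMap [IsEmpty N]
    {f g : C(X, Y)} (K : f.Homotopy g) (x : X) :
    homotopyGroupEquivZerothHomotopyOfIsEmpty N (f x) ∘ inducedMap N f x =
      homotopyGroupEquivZerothHomotopyOfIsEmpty N (g x) ∘ inducedMap N g x := by
  funext q
  induction q using Quotient.ind with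
  | _ a => exact Quotient.sound ⟨K.evalAt (a 0)⟩

theorem _root_.ContinuousMap.Homotopic.bijective_inducedMap_iff [Fintype N] {f g : C(X, Y)}
    (h : f.Homotopic g) (x : X) :
    Bijective (inducedMap N f x) ↔ Bijective (inducedMap N g x) := by
  obtain ⟨K⟩ := h
  rcases isEmpty_or_nonempty N
  · rw [← Equiv.comp_bijective _ (homotopyGroupEquivZerothHomotopyOfIsEmpty N (f x)),
      K.zerothHomotopy_comp_inducedMap, Equiv.comp_bijective]
  · rw [← K.transport_comp_inducedMap, Equiv.comp_bijective]

end HomotopyGroup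

section WeakHomotopyEquiv

open Function HomotopyGroup

variable {X Y Z : Type*} [TopologicalSpace X] [TopologicalSpace Y] [TopologicalSpace Z]

theorem IsWeakHomotopyEquiv.comp {g : C(Y, Z)} {f : C(X, Y)} (hg : IsWeakHomotopyEquiv g)
    (hf : IsWeakHomotopyEquiv f) : IsWeakHomotopyEquiv (g.comp f) := fun n x => by
  rw [inducedMap_comp]
  exact (hg n (f x)).comp (hf n x)

theorem ContinuousMap.Homotopic.isWeakHomotopyEquiv_iff {f g : C(X, Y)} (h : f.Homotopic g) :
    IsWeakHomotopyEquiv f ↔ IsWeakHomotopyEquiv g :=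
  forall₂_congr fun _ x => h.bijective_inducedMap_iff x

theorem ContinuousMap.Homotopic.bijective_inducedMap_of_id {f : C(X, X)}
    (h : f.Homotopic (ContinuousMap.id X)) (n : ℕ) (x : X) :
    Bijective (inducedMap (Fin n) f x) := by
  rw [h.bijective_inducedMap_iff, inducedMap_id]
  exact bijective_id

theorem ContinuousMap.HomotopyEquiv.isWeakHomotopyEquiv (e : X ≃ₕ Y) :
    IsWeakHomotopyEquiv e.toFun := by
  intro n x
  have hl := e.left_inv.bijective_inducedMap_of_id n x
  have hr := e.right_inv.bijective_inducedMap_of_id n (e.toFun x)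
  rw [inducedMap_comp] at hl hr
  have hinv : Bijective (inducedMap (Fin n) e.invFun (e.toFun x)) :=
    ⟨hr.injective.of_comp, hl.surjective.of_comp⟩
  exact (hinv.of_comp_iff' _).1 hl

end WeakHomotopyEquiv

section Stmt19

variable {F F' E B : Type} [TopologicalSpace F] [TopologicalSpace F'] [TopologicalSpace E]
  [TopologicalSpace B]

/-- The canonical comparison map from `F` to the homotopy fiber of `p : E → B`, for a map
`f : F → E` with `p ∘ f` constant at the basepoint. -/
def fiberComparison (p : C(E, B)) (b₀ : B) (f : C(F, E)) (hconst : ∀ x, p (f x) = b₀) :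
    C(F, HomotopyFiber p b₀) :=
  ⟨fun x => ⟨(f x, ContinuousMap.const I b₀), (hconst x).symm, rfl⟩,
    Continuous.subtype_mk (f.continuous.prodMk continuous_const) _⟩

/-- The comparison map from `F'` to the homotopy fiber of `p` induced by a map `i : F' → E`
together with a homotopy `H` from `i` to a map into the fiber. -/
def fiberComparisonOfHomotopy (p : C(E, B)) (b₀ : B) (i : C(F', E))
    (H : C(F' × I, E)) (h1 : ∀ x, p (H (x, 1)) = b₀) (h0 : ∀ x, H (x, 0) = i x) :
    C(F', HomotopyFiber p b₀) :=
  ⟨fun x => ⟨(i x, (p.comp H).curry x), by simp [h0 x], by simp [h1 x]⟩,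
    Continuous.subtype_mk (i.continuous.prodMk (p.comp H).curry.continuous) _⟩

theorem fiberComparisonOfHomotopy_homotopic (p : C(E, B)) (b₀ : B) (f : C(F, E))
    (hconst : ∀ x, p (f x) = b₀) (i : C(F', E)) (φ : C(F', F)) (H : C(F' × I, E))
    (h1 : ∀ x, p (H (x, 1)) = b₀) (h0 : ∀ x, H (x, 0) = i x)
    (hend : ∀ x, H (x, 1) = f (φ x)) :
    (fiberComparisonOfHomotopy p b₀ i H h1 h0).Homotopic
      ((fiberComparison p b₀ f hconst).comp φ) := by
  let path : C(I × F', C(I, B)) :=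
    (p.comp (H.comp ⟨fun q : (I × F') × I => (q.1.2, max q.1.1 q.2), by fun_prop⟩)).curry
  refine ⟨⟨⟨fun q => ⟨(H (q.2, q.1), path q), by simp [path],
    by simp [path, unitInterval.le_one', h1]⟩, ?_⟩, fun x => ?_, fun x => ?_⟩⟩
  · fun_prop
  · refine Subtype.ext (Prod.ext (h0 x) (ContinuousMap.ext fun t => ?_))
    simp [path]
    rfl
  · refine Subtype.ext (Prod.ext (hend x) (ContinuousMap.ext fun t => ?_))
    simp [path, unitInterval.le_one', h1]
    rfl

/-- **Comparison of homotopy fibers.**  If `F → E → B` is a homotopy fibration sequence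
(i.e. the canonical map from `F` to the homotopy fiber of `p` is a weak equivalence), and
`i : F' → E` is another map equipped with a homotopy equivalence `φ : F' → F` over `E`
(witnessed by a homotopy `H` from `i` to `f ∘ φ`), then the induced comparison map from `F'`
to the homotopy fiber of `p` is a weak homotopy equivalence.  (In the shearing situation of
the grouplike monoid `G` acting on `Z`, applied to the trivial fibration `G × Z → Z` and
`q : G × Z → W`, this yields the weak equivalence `Ω Z ≃ Ω W` of homotopy fibers.) -/
theorem fiberComparison_weakEquiv
    (p : C(E, B)) (b₀ : B) (f : C(F, E)) (hconst : ∀ x, p (f x) = b₀)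
    (hfib : IsWeakHomotopyEquiv (fiberComparison p b₀ f hconst))
    (i : C(F', E)) (φ : C(F', F))
    (hφ : ∃ e : ContinuousMap.HomotopyEquiv F' F, ⇑e.toFun = ⇑φ)
    (H : C(F' × I, E)) (h0 : ∀ x, H (x, 0) = i x) (hend : ∀ x, H (x, 1) = f (φ x)) :
    IsWeakHomotopyEquiv
      (fiberComparisonOfHomotopy p b₀ i H
        (fun x => by rw [hend x, hconst]) h0) := by
  obtain ⟨e, he⟩ := hφ
  obtain rfl : e.toFun = φ := DFunLike.coe_injective he
  exact (fiberComparisonOfHomotopy_homotopic p b₀ f hconst i _ H _ h0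
    hend).isWeakHomotopyEquiv_iff.2 (hfib.comp e.isWeakHomotopyEquiv)

end Stmt19

end
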